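/- Let Λ ≅ ℤⁿ be a lattice in ℝⁿ, T = ℝⁿ/Λ, and ℓ(x) = √⟨x, Ax⟩ for A symmetric positive definite. Let q_*ℓ(x+Λ) := inf_{λ∈Λ} ℓ(x+λ) be the quotient length on T. Then for any k ∈ ℝⁿ with ⟨Λ, k⟩ ⊆ 2πℤ (so that φ_k(x+Λ) = e^{i⟨x,k⟩} is a well-defined character of T), the dual length satisfies: sup over x+Λ with q_*ℓ(x+Λ)≠0 of ℓ^{arc}(e^{i⟨x,k⟩})/q_*ℓ(x+Λ) = sup over y ∈ ℝⁿ, y ≠ 0 of ℓ^{arc}(e^{i⟨y,k⟩})/ℓ(y) = √⟨k, A⁻¹k⟩. -/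

import Mathlib

/-!
Cauchy–Schwarz for the form `A` gives `|⟨y, k⟩| ≤ ℓ(y) √⟨k, A⁻¹k⟩`, and `larc θ ≤ |θ|`, so the
quotient on `ℝⁿ` is at most `√⟨k, A⁻¹k⟩`; equality holds at the multiple `x₀` of `A⁻¹k` with
`⟨x₀, k⟩ = π`, where `larc = |·|`. Since `larc ⟨x, k⟩` only depends on `x + Λ`, the same bound
holds with `ℓ` replaced by the quotient length `q_*ℓ`. At `x₀` it squeezes `q_*ℓ(x₀)` between
`π / √⟨k, A⁻¹k⟩` and `ℓ(x₀)`, which are equal, so the bound is attained on the torus too.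
-/

open Matrix

/-- arclength distance from `1` to `e^{iθ}` on the unit circle. -/
noncomputable def larc (θ : ℝ) : ℝ := ⨅ k : ℤ, |θ + 2 * Real.pi * k|

/-- Attainment is only asked for `a ≠ 0`: a supremum over an empty index type is `0`. -/
lemma Real.iSup_eq_of_forall_le_of_exists_eq {ι : Sort*} {f : ι → ℝ} {a : ℝ}
    (hf : ∀ i, 0 ≤ f i) (hle : ∀ i, f i ≤ a) (hex : a ≠ 0 → ∃ i, f i = a) :
    ⨆ i, f i = a := by
  rcases eq_or_ne a 0 with rfl | ha
  · exact le_antisymm (Real.iSup_le hle le_rfl) (Real.iSup_nonneg hf)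
  · obtain ⟨i, hi⟩ := hex ha
    exact le_antisymm (Real.iSup_le hle (hi ▸ hf i))
      (le_ciSup_of_le ⟨a, Set.forall_mem_range.2 hle⟩ i hi.ge)

lemma larc_nonneg (θ : ℝ) : 0 ≤ larc θ :=
  le_ciInf fun _ => abs_nonneg _

lemma larc_le (θ : ℝ) (m : ℤ) : larc θ ≤ |θ + 2 * Real.pi * m| :=
  ciInf_le ⟨0, Set.forall_mem_range.2 fun _ => abs_nonneg _⟩ m

lemma larc_le_abs (θ : ℝ) : larc θ ≤ |θ| := by
  simpa using larc_le θ 0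

lemma larc_add_two_pi_mul_int (θ : ℝ) (m : ℤ) : larc (θ + 2 * Real.pi * m) = larc θ := by
  refine Eq.trans (iInf_congr fun j => ?_)
    ((Equiv.addRight m).iInf_comp (g := fun i : ℤ => |θ + 2 * Real.pi * i|))
  simp only [Equiv.coe_addRight, Int.cast_add]
  ring_nf

lemma larc_eq_abs_of_abs_le_pi {θ : ℝ} (hθ : |θ| ≤ Real.pi) : larc θ = |θ| := by
  refine le_antisymm (larc_le_abs θ) (le_ciInf fun m => ?_)
  rcases eq_or_ne m 0 with rfl | hm
  · simp
  have hm' : (1 : ℝ) ≤ |(m : ℝ)| := by exact_mod_cast Int.one_le_abs hm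
  have h2πm : 2 * Real.pi ≤ |2 * Real.pi * m| := by
    rw [abs_mul, abs_of_pos Real.two_pi_pos]
    nlinarith [Real.pi_pos]
  have htri := abs_sub_abs_le_abs_sub (2 * Real.pi * m) (-θ)
  rw [abs_neg, sub_neg_eq_add, add_comm] at htri
  linarith

lemma larc_pi : larc Real.pi = Real.pi := by
  rw [larc_eq_abs_of_abs_le_pi (abs_of_pos Real.pi_pos).le, abs_of_pos Real.pi_pos]

lemma Matrix.PosSemidef.dotProduct_mulVec_sq_le {ι : Type*} [Fintype ι] {M : Matrix ι ι ℝ}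
    (hM : M.PosSemidef) (u v : ι → ℝ) :
    (u ⬝ᵥ M *ᵥ v) ^ 2 ≤ (u ⬝ᵥ M *ᵥ u) * (v ⬝ᵥ M *ᵥ v) := by
  have hsymm : v ⬝ᵥ M *ᵥ u = u ⬝ᵥ M *ᵥ v := by
    rw [dotProduct_mulVec, ← mulVec_transpose, ← conjTranspose_eq_transpose_of_trivial,
      hM.isHermitian.eq, dotProduct_comm]
  have hquad : ∀ t : ℝ,
      0 ≤ (v ⬝ᵥ M *ᵥ v) * (t * t) + 2 * (u ⬝ᵥ M *ᵥ v) * t + u ⬝ᵥ M *ᵥ u := by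
    intro t
    have h := hM.dotProduct_mulVec_nonneg (u + t • v)
    simp only [star_trivial, mulVec_add, mulVec_smul, dotProduct_add, add_dotProduct,
      smul_dotProduct, dotProduct_smul, smul_eq_mul, hsymm] at h
    linarith
  have hdisc := discrim_le_zero hquad
  rw [discrim] at hdisc
  linarith

section formLength

variable {ι : Type*} [Fintype ι]

noncomputable def formLength (A : Matrix ι ι ℝ) (x : ι → ℝ) : ℝ := √(x ⬝ᵥ A *ᵥ x)

noncomputable def quotLength (A : Matrix ι ι ℝ) (Λ : AddSubgroup (ι → ℝ)) (x : ι → ℝ) : ℝ :=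
  ⨅ l : Λ, formLength A (x + l)

lemma formLength_nonneg (A : Matrix ι ι ℝ) (x : ι → ℝ) : 0 ≤ formLength A x :=
  Real.sqrt_nonneg _

lemma formLength_smul (A : Matrix ι ι ℝ) (t : ℝ) (x : ι → ℝ) :
    formLength A (t • x) = |t| * formLength A x := by
  rw [formLength, mulVec_smul, smul_dotProduct, dotProduct_smul, smul_eq_mul, smul_eq_mul,
    ← mul_assoc, Real.sqrt_mul (mul_self_nonneg t), Real.sqrt_mul_self_eq_abs, formLength]

lemma quotLength_nonneg (A : Matrix ι ι ℝ) (Λ : AddSubgroup (ι → ℝ)) (x : ι → ℝ) :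
    0 ≤ quotLength A Λ x :=
  le_ciInf fun _ => formLength_nonneg A _

lemma quotLength_le_formLength (A : Matrix ι ι ℝ) (Λ : AddSubgroup (ι → ℝ)) (x : ι → ℝ) :
    quotLength A Λ x ≤ formLength A x := by
  have := ciInf_le (f := fun l : Λ => formLength A (x + l))
    ⟨0, Set.forall_mem_range.2 fun _ => formLength_nonneg A _⟩ 0
  rwa [ZeroMemClass.coe_zero, add_zero] at this

variable [DecidableEq ι] {A : Matrix ι ι ℝ}

lemma Matrix.PosDef.mulVec_inv_mulVec (hA : A.PosDef) (v : ι → ℝ) : A *ᵥ A⁻¹ *ᵥ v = v := by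
  rw [mulVec_mulVec, mul_nonsing_inv A hA.det_pos.ne'.isUnit, one_mulVec]

lemma Matrix.PosDef.abs_dotProduct_le (hA : A.PosDef) (y k : ι → ℝ) :
    |y ⬝ᵥ k| ≤ formLength A y * √(k ⬝ᵥ A⁻¹ *ᵥ k) := by
  have hCS := hA.posSemidef.dotProduct_mulVec_sq_le y (A⁻¹ *ᵥ k)
  rw [hA.mulVec_inv_mulVec, dotProduct_comm (A⁻¹ *ᵥ k)] at hCS
  rw [formLength, ← Real.sqrt_mul (by simpa using hA.posSemidef.dotProduct_mulVec_nonneg y)]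
  exact Real.abs_le_sqrt hCS

lemma larc_le_mul_formLength (hA : A.PosDef) (y k : ι → ℝ) :
    larc (y ⬝ᵥ k) ≤ √(k ⬝ᵥ A⁻¹ *ᵥ k) * formLength A y :=
  (larc_le_abs _).trans ((hA.abs_dotProduct_le y k).trans_eq (mul_comm _ _))

lemma larc_le_mul_quotLength (hA : A.PosDef) {Λ : AddSubgroup (ι → ℝ)} {k : ι → ℝ}
    (hk : ∀ l ∈ Λ, ∃ m : ℤ, l ⬝ᵥ k = 2 * Real.pi * m) (x : ι → ℝ) :
    larc (x ⬝ᵥ k) ≤ √(k ⬝ᵥ A⁻¹ *ᵥ k) * quotLength A Λ x := by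
  rw [quotLength, Real.mul_iInf_of_nonneg (Real.sqrt_nonneg _)]
  refine le_ciInf fun l => ?_
  obtain ⟨m, hm⟩ := hk l l.2
  calc larc (x ⬝ᵥ k) = larc ((x + (l : ι → ℝ)) ⬝ᵥ k) := by
        rw [add_dotProduct, hm, larc_add_two_pi_mul_int]
    _ ≤ _ := larc_le_mul_formLength hA _ k

lemma exists_dotProduct_eq_pi (hA : A.PosDef) {k : ι → ℝ} (hk : k ≠ 0) :
    ∃ x : ι → ℝ, x ⬝ᵥ k = Real.pi ∧ formLength A x = Real.pi / √(k ⬝ᵥ A⁻¹ *ᵥ k) := by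
  set z := A⁻¹ *ᵥ k
  have hzk : 0 < z ⬝ᵥ k := by simpa [dotProduct_comm] using hA.inv.dotProduct_mulVec_pos hk
  refine ⟨(Real.pi / (z ⬝ᵥ k)) • z, ?_, ?_⟩
  · rw [smul_dotProduct, smul_eq_mul, div_mul_cancel₀ _ hzk.ne']
  · have hz : formLength A z = √(z ⬝ᵥ k) := by rw [formLength, hA.mulVec_inv_mulVec]
    rw [formLength_smul, hz, dotProduct_comm k, abs_of_pos (div_pos Real.pi_pos hzk),
      div_mul_eq_mul_div, mul_div_assoc, Real.sqrt_div_self', mul_one_div]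

lemma iSup_larc_div_formLength (hA : A.PosDef) (k : ι → ℝ) :
    ⨆ y : {y : ι → ℝ // y ≠ 0}, larc ((y : ι → ℝ) ⬝ᵥ k) / formLength A y =
      √(k ⬝ᵥ A⁻¹ *ᵥ k) := by
  refine Real.iSup_eq_of_forall_le_of_exists_eq
    (fun y => div_nonneg (larc_nonneg _) (formLength_nonneg A y))
    (fun y => div_le_of_le_mul₀ (formLength_nonneg A y) (Real.sqrt_nonneg _)
      (larc_le_mul_formLength hA y k)) fun hD => ?_
  have hk : k ≠ 0 := by rintro rfl; simp at hD
  obtain ⟨x, hxk, hx⟩ := exists_dotProduct_eq_pi hA hk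
  have hx0 : x ≠ 0 := by rintro rfl; simp [Real.pi_ne_zero.symm] at hxk
  refine ⟨⟨x, hx0⟩, ?_⟩
  rw [hxk, larc_pi, hx, div_div_cancel₀ Real.pi_ne_zero]

lemma iSup_larc_div_quotLength (hA : A.PosDef) {Λ : AddSubgroup (ι → ℝ)} {k : ι → ℝ}
    (hk : ∀ l ∈ Λ, ∃ m : ℤ, l ⬝ᵥ k = 2 * Real.pi * m) :
    ⨆ x : {x : ι → ℝ // quotLength A Λ x ≠ 0},
        larc ((x : ι → ℝ) ⬝ᵥ k) / quotLength A Λ x = √(k ⬝ᵥ A⁻¹ *ᵥ k) := by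
  refine Real.iSup_eq_of_forall_le_of_exists_eq
    (fun x => div_nonneg (larc_nonneg _) (quotLength_nonneg A Λ x))
    (fun x => div_le_of_le_mul₀ (quotLength_nonneg A Λ x) (Real.sqrt_nonneg _)
      (larc_le_mul_quotLength hA hk x)) fun hD => ?_
  have hk0 : k ≠ 0 := by rintro rfl; simp at hD
  obtain ⟨x, hxk, hx⟩ := exists_dotProduct_eq_pi hA hk0
  have hDpos : 0 < √(k ⬝ᵥ A⁻¹ *ᵥ k) := (Real.sqrt_nonneg _).lt_of_ne' hD
  have hqx : quotLength A Λ x = Real.pi / √(k ⬝ᵥ A⁻¹ *ᵥ k) := by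
    refine le_antisymm (hx ▸ quotLength_le_formLength A Λ x) ?_
    rw [div_le_iff₀' hDpos, ← larc_pi, ← hxk]
    exact larc_le_mul_quotLength hA hk x
  refine ⟨⟨x, hqx ▸ (div_pos Real.pi_pos hDpos).ne'⟩, ?_⟩
  rw [hxk, larc_pi, hqx, div_div_cancel₀ Real.pi_ne_zero]

end formLength

theorem pontryagin_dual_length_torus_general {n : ℕ}
    (A : Matrix (Fin n) (Fin n) ℝ) (hA : A.PosDef)
    (Λ : AddSubgroup (Fin n → ℝ))
    (k : Fin n → ℝ) (hk : ∀ l ∈ Λ, ∃ m : ℤ, l ⬝ᵥ k = 2 * Real.pi * m) :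
    let ℓ : (Fin n → ℝ) → ℝ := fun x => Real.sqrt (x ⬝ᵥ A.mulVec x)
    let ql : (Fin n → ℝ) → ℝ := fun x => ⨅ l : Λ, ℓ (x + (l : Fin n → ℝ))
    (⨆ x : {x : Fin n → ℝ // ql x ≠ 0},
        larc ((x : Fin n → ℝ) ⬝ᵥ k) / ql (x : Fin n → ℝ)) =
      (⨆ y : {y : Fin n → ℝ // y ≠ 0},
        larc ((y : Fin n → ℝ) ⬝ᵥ k) / ℓ (y : Fin n → ℝ)) ∧
    (⨆ y : {y : Fin n → ℝ // y ≠ 0},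
        larc ((y : Fin n → ℝ) ⬝ᵥ k) / ℓ (y : Fin n → ℝ)) =
      Real.sqrt (k ⬝ᵥ A⁻¹.mulVec k) :=
  ⟨(iSup_larc_div_quotLength hA hk).trans (iSup_larc_div_formLength hA k).symm,
    iSup_larc_div_formLength hA k⟩

/-- for a torus `T = ℝⁿ/Λ` with quotient length `q_*ℓ` of
`ℓ(x) = √⟨x,Ax⟩`, and a character `φ_k` of `T` (i.e. `⟨Λ,k⟩ ⊆ 2πℤ`), the dual length of
`φ_k` computed on the torus equals the one computed on `ℝⁿ`, which is `√⟨k,A⁻¹k⟩`. -/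
theorem pontryagin_dual_length_torus {n : ℕ}
    (A : Matrix (Fin n) (Fin n) ℝ) (hA : A.PosDef)
    (Λ : AddSubgroup (Fin n → ℝ)) (b : Module.Basis (Fin n) ℝ (Fin n → ℝ))
    (hΛ : Λ = AddSubgroup.closure (Set.range ⇑b))
    (k : Fin n → ℝ) (hk : ∀ l ∈ Λ, ∃ m : ℤ, l ⬝ᵥ k = 2 * Real.pi * m) :
    let ℓ : (Fin n → ℝ) → ℝ := fun x => Real.sqrt (x ⬝ᵥ A.mulVec x)
    let ql : (Fin n → ℝ) → ℝ := fun x => ⨅ l : Λ, ℓ (x + (l : Fin n → ℝ))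
    (⨆ x : {x : Fin n → ℝ // ql x ≠ 0},
        larc ((x : Fin n → ℝ) ⬝ᵥ k) / ql (x : Fin n → ℝ)) =
      (⨆ y : {y : Fin n → ℝ // y ≠ 0},
        larc ((y : Fin n → ℝ) ⬝ᵥ k) / ℓ (y : Fin n → ℝ)) ∧
    (⨆ y : {y : Fin n → ℝ // y ≠ 0},
        larc ((y : Fin n → ℝ) ⬝ᵥ k) / ℓ (y : Fin n → ℝ)) =
      Real.sqrt (k ⬝ᵥ A⁻¹.mulVec k) :=
  pontryagin_dual_length_torus_general A hA Λ k hk
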